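/- arXiv:2508.01806 — 2 statements merged into one kernel-verified Lean document; each statement's English description precedes it below -/
import Mathlib

section
/- There exists a constant C > 0, depending only on T, γ, ħ, μ_B, g, the matrices S_{1i}, S_{2i}, H_hfi, K, the bounds m_i, M_i, |v₀| and max_l |ψ_T^l|, such that for all u ∈ 𝒱 and all δu ∈ L²((0,T); ℝ³) with u + δu ∈ 𝒱, and every l = 1, …, s, one has sup_{t ∈ [0,T]} |ψ^l(t; u + δu) − ψ^l(t; u)| ≤ C ∫₀ᵀ |δu(τ)| dτ. -/
open MeasureTheory Set

noncomputable section

/-- ℝ³ with the Euclidean norm. -/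
abbrev E3 : Type := EuclideanSpace ℝ (Fin 3)

/-- membership in the box `V = ∏ [lo i, hi i]`. -/
def inBox (lo hi : Fin 3 → ℝ) (w : E3) : Prop :=
  ∀ i, lo i ≤ w i ∧ w i ≤ hi i

/-- the admissible control set 𝒱 : L²((0,T);ℝ³) functions with values in the box a.e. -/
def Adm (T : ℝ) (lo hi : Fin 3 → ℝ) (u : ℝ → E3) : Prop :=
  MemLp u 2 (volume.restrict (Set.Ioc (0:ℝ) T)) ∧
    ∀ᵐ t ∂(volume.restrict (Set.Ioc (0:ℝ) T)), inBox lo hi (u t)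

/-- the filtered field  v(t;u) = e^{−γt}(v₀ + ∫₀ᵗ γ e^{γτ} u(τ) dτ). -/
def vfield (γ : ℝ) (v0 : E3) (u : ℝ → E3) (t : ℝ) : E3 :=
  Real.exp (-(γ * t)) • (v0 + ∫ τ in Set.Ioc (0:ℝ) t, (γ * Real.exp (γ * τ)) • u τ)

/-- the inner product ⟨a,b⟩ = ∑ conj(a j) * b j on ℂⁿ. -/
def cInner {n : ℕ} (a b : Fin n → ℂ) : ℂ := ∑ j, (starRingEnd ℂ) (a j) * b j

/-- the Euclidean norm on ℂⁿ. -/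
def cNorm {n : ℕ} (a : Fin n → ℂ) : ℝ := Real.sqrt (∑ j, Complex.normSq (a j))

/-- Zeeman term H_Z(v) = μB g ∑ᵢ vᵢ (S1ᵢ + S2ᵢ). -/
def HZmat {n : ℕ} (μB g : ℝ) (S1 S2 : Fin 3 → Matrix (Fin n) (Fin n) ℂ) (v : E3) :
    Matrix (Fin n) (Fin n) ℂ :=
  ((μB * g : ℝ) : ℂ) • ∑ i, ((v i : ℝ) : ℂ) • (S1 i + S2 i)

/-- K = (k_S P_S + k_T P_T)/2. -/
def Kmat {n : ℕ} (kS kT : ℝ) (PS PT : Matrix (Fin n) (Fin n) ℂ) : Matrix (Fin n) (Fin n) ℂ :=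
  ((1 : ℂ) / 2) • ((kS : ℂ) • PS + (kT : ℂ) • PT)

/-- H(v) = H_Z(v) + H_hfi − iK. -/
def Ham {n : ℕ} (μB g kS kT : ℝ) (S1 S2 : Fin 3 → Matrix (Fin n) (Fin n) ℂ)
    (Hhfi PS PT : Matrix (Fin n) (Fin n) ℂ) (v : E3) : Matrix (Fin n) (Fin n) ℂ :=
  HZmat μB g S1 S2 v + Hhfi - Complex.I • Kmat kS kT PS PT

/-- H*(v) = H_Z(v) + H_hfi + iK. -/
def HamStar {n : ℕ} (μB g kS kT : ℝ) (S1 S2 : Fin 3 → Matrix (Fin n) (Fin n) ℂ)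
    (Hhfi PS PT : Matrix (Fin n) (Fin n) ℂ) (v : E3) : Matrix (Fin n) (Fin n) ℂ :=
  HZmat μB g S1 S2 v + Hhfi + Complex.I • Kmat kS kT PS PT

/-- ψ solves iħ ψ' = Hm(t) ψ, ψ(0) = ψ0 (equivalently ψ' = (−i/ħ) Hm(t) ψ). -/
def IsSchrodingerSol {n : ℕ} (hbar : ℝ) (Hm : ℝ → Matrix (Fin n) (Fin n) ℂ)
    (ψ0 : Fin n → ℂ) (ψ : ℝ → Fin n → ℂ) : Prop :=
  ψ 0 = ψ0 ∧ ∀ t : ℝ, HasDerivAt ψ ((-Complex.I / (hbar : ℂ)) • (Hm t).mulVec (ψ t)) t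

/-- χ solves iħ χ' = Hm(t) χ − i (k_S/2) P_S ψ(t), χ(T) = 0. -/
def IsAdjointSol {n : ℕ} (T hbar kS : ℝ) (Hm : ℝ → Matrix (Fin n) (Fin n) ℂ)
    (PS : Matrix (Fin n) (Fin n) ℂ) (ψ χ : ℝ → Fin n → ℂ) : Prop :=
  χ T = 0 ∧ ∀ t : ℝ, HasDerivAt χ
    ((-Complex.I / (hbar : ℂ)) •
      ((Hm t).mulVec (χ t) - (Complex.I * ((kS : ℂ) / 2)) • PS.mulVec (ψ t))) t

/-- (ψ^l)_{l} is the family of state trajectories for control u. -/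
def SchroSol {n s : ℕ} (γ hbar μB g kS kT : ℝ)
    (S1 S2 : Fin 3 → Matrix (Fin n) (Fin n) ℂ) (Hhfi PS PT : Matrix (Fin n) (Fin n) ℂ)
    (v0 : E3) (ψT : Fin s → Fin n → ℂ) (u : ℝ → E3) (ψ : Fin s → ℝ → Fin n → ℂ) : Prop :=
  ∀ l, IsSchrodingerSol hbar
    (fun t => Ham μB g kS kT S1 S2 Hhfi PS PT (vfield γ v0 u t)) (ψT l) (ψ l)

/-- (χ^l)_{l} is the family of adjoint trajectories for control u and states ψ. -/
def AdjSol {n s : ℕ} (T γ hbar μB g kS kT : ℝ)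
    (S1 S2 : Fin 3 → Matrix (Fin n) (Fin n) ℂ) (Hhfi PS PT : Matrix (Fin n) (Fin n) ℂ)
    (v0 : E3) (u : ℝ → E3) (ψ χ : Fin s → ℝ → Fin n → ℂ) : Prop :=
  ∀ l, IsAdjointSol T hbar kS
    (fun t => HamStar μB g kS kT S1 S2 Hhfi PS PT (vfield γ v0 u t)) PS (ψ l) (χ l)

/-- the cost functional J expressed through the trajectories:
J = (k_S/(2s)) ∑_l ∫₀ᵀ ⟨ψ^l, P_S ψ^l⟩ dt. -/
def cost {n s : ℕ} (T kS : ℝ) (PS : Matrix (Fin n) (Fin n) ℂ)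
    (ψ : Fin s → ℝ → Fin n → ℂ) : ℝ :=
  (kS / (2 * (s : ℝ))) * ∑ l, ∫ t in (0:ℝ)..T, (cInner (ψ l t) (PS.mulVec (ψ l t))).re

/-- the switching function σ_{u,i}(t) = (2γμ_Bg/s) ∑_l ∫_t^T Im⟨χ^l(τ),(S1ᵢ+S2ᵢ)ψ^l(τ)⟩ e^{γ(t−τ)} dτ. -/
def swFn {n s : ℕ} (T γ μB g : ℝ) (S1 S2 : Fin 3 → Matrix (Fin n) (Fin n) ℂ)
    (ψ χ : Fin s → ℝ → Fin n → ℂ) (i : Fin 3) (t : ℝ) : ℝ :=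
  (2 * γ * μB * g / (s : ℝ)) * ∑ l, ∫ τ in t..T,
    (cInner (χ l τ) ((S1 i + S2 i).mulVec (ψ l τ))).im * Real.exp (γ * (t - τ))

/-!
Along an admissible control the filtered field stays in a fixed ball, so both state equations are
linear ODEs `ψ' = A(t) ψ` with coefficients bounded by one constant `K`, and Grönwall bounds every
trajectory by `‖ψ_T‖ e^{KT}`. The difference of the two trajectories solves the same kind of
equation forced by `(B - A) ψb`, where `B - A = -(i/ħ) H_Z(δv)` is linear in the field increment
`δv(t) = e^{-γt} ∫₀ᵗ γ e^{γτ} δu(τ) dτ`, and `|δv(t)| ≤ γ ∫₀ᵀ |δu|`; Grönwall once more gives the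
estimate.
-/

attribute [local instance] Matrix.linftyOpNormedAddCommGroup Matrix.linftyOpNormedSpace

open Matrix Real

section LinearODE

variable {𝕜 m : Type*} [RCLike 𝕜] [Fintype m] {A B : ℝ → Matrix m m 𝕜} {f g : ℝ → m → 𝕜}
  {K ε T : ℝ}

theorem norm_le_of_hasDerivAt_mulVec (hf : ∀ t, HasDerivAt f (A t *ᵥ f t) t)
    (hA : ∀ t ∈ Ico 0 T, ‖A t‖ ≤ K) : ∀ t ∈ Icc 0 T, ‖f t‖ ≤ ‖f 0‖ * exp (K * t) := by
  intro t ht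
  have := norm_le_gronwallBound_of_norm_deriv_right_le (ε := 0)
    (fun x _ => (hf x).continuousAt.continuousWithinAt) (fun x _ => (hf x).hasDerivWithinAt)
    le_rfl (fun x hx => by
      rw [add_zero]
      exact (linfty_opNorm_mulVec _ _).trans (by gcongr; exact hA x hx)) t ht
  rwa [gronwallBound_ε0, sub_zero] at this

theorem gronwallBound_zero_le (hK : 0 ≤ K) (hε : 0 ≤ ε) (x : ℝ) :
    gronwallBound 0 K ε x ≤ ε * x * exp (K * x) := by
  rcases hK.eq_or_lt with rfl | hK
  · simp [gronwallBound_K0]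
  simp only [gronwallBound_of_K_ne_0 hK.ne', zero_mul, zero_add]
  rw [mul_assoc, div_mul_eq_mul_div, mul_div_assoc]
  gcongr
  rw [div_le_iff₀ hK]
  nlinarith [add_one_le_exp (-(K * x)), exp_neg (K * x), exp_pos (K * x),
    mul_inv_cancel₀ (exp_pos (K * x)).ne']

theorem norm_sub_le_of_hasDerivAt_mulVec (hK : 0 ≤ K) (hε : 0 ≤ ε)
    (hf : ∀ t, HasDerivAt f (A t *ᵥ f t) t) (hg : ∀ t, HasDerivAt g (B t *ᵥ g t) t)
    (h0 : f 0 = g 0) (hA : ∀ t ∈ Ico 0 T, ‖A t‖ ≤ K) (hB : ∀ t ∈ Ico 0 T, ‖B t‖ ≤ K)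
    (hAB : ∀ t ∈ Ico 0 T, ‖B t - A t‖ ≤ ε) :
    ∀ t ∈ Icc 0 T, ‖g t - f t‖ ≤ ε * ‖f 0‖ * T * exp (2 * K * T) := by
  intro t ht
  have hT : 0 ≤ T := ht.1.trans ht.2
  have hgT : ∀ x ∈ Icc 0 T, ‖g x‖ ≤ ‖f 0‖ * exp (K * T) := fun x hx =>
    (norm_le_of_hasDerivAt_mulVec hg hB x hx).trans (by rw [h0]; gcongr; exact hx.2)
  have hd : ∀ x ∈ Ico 0 T, ‖B x *ᵥ g x - A x *ᵥ f x‖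
      ≤ K * ‖g x - f x‖ + ε * (‖f 0‖ * exp (K * T)) := by
    intro x hx
    rw [show B x *ᵥ g x - A x *ᵥ f x = A x *ᵥ (g x - f x) + (B x - A x) *ᵥ g x by
      rw [mulVec_sub, sub_mulVec]; abel]
    refine (norm_add_le _ _).trans (add_le_add ?_ ?_)
    · exact (linfty_opNorm_mulVec _ _).trans (by gcongr; exact hA x hx)
    · exact (linfty_opNorm_mulVec _ _).trans
        (mul_le_mul (hAB x hx) (hgT x (Ico_subset_Icc_self hx)) (norm_nonneg _) hε)
  have := norm_le_gronwallBound_of_norm_deriv_right_le (δ := 0)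
    (fun x _ => ((hg x).sub (hf x)).continuousAt.continuousWithinAt)
    (fun x _ => ((hg x).sub (hf x)).hasDerivWithinAt) (by simp [h0]) hd t ht
  rw [sub_zero] at this
  calc ‖g t - f t‖ ≤ ε * (‖f 0‖ * exp (K * T)) * t * exp (K * t) :=
        this.trans (gronwallBound_zero_le hK (by positivity) t)
    _ ≤ ε * (‖f 0‖ * exp (K * T)) * T * exp (K * T) := by gcongr <;> exact ht.2
    _ = ε * ‖f 0‖ * T * exp (2 * K * T) := by rw [two_mul, add_mul, exp_add]; ring

end LinearODE

section Hamiltonian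

variable {n : ℕ} (μB g kS kT : ℝ) (S1 S2 : Fin 3 → Matrix (Fin n) (Fin n) ℂ)
  (Hhfi PS PT : Matrix (Fin n) (Fin n) ℂ)

theorem norm_HZmat_le (v : E3) :
    ‖HZmat μB g S1 S2 v‖ ≤ |μB * g| * (∑ i, ‖S1 i + S2 i‖) * ‖v‖ := by
  rw [HZmat, norm_smul, Complex.norm_real, Real.norm_eq_abs, mul_assoc, Finset.sum_mul]
  gcongr
  refine (norm_sum_le _ _).trans (Finset.sum_le_sum fun i _ => ?_)
  rw [norm_smul, Complex.norm_real, mul_comm]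
  gcongr
  exact PiLp.norm_apply_le v i

theorem HZmat_sub (v w : E3) :
    HZmat μB g S1 S2 v - HZmat μB g S1 S2 w = HZmat μB g S1 S2 (v - w) := by
  simp only [HZmat, ← smul_sub, ← Finset.sum_sub_distrib, ← sub_smul, PiLp.sub_apply,
    Complex.ofReal_sub]

theorem Ham_sub (v w : E3) :
    Ham μB g kS kT S1 S2 Hhfi PS PT v - Ham μB g kS kT S1 S2 Hhfi PS PT w
      = HZmat μB g S1 S2 (v - w) := by
  rw [Ham, Ham, ← HZmat_sub]
  abel

theorem norm_Ham_le (v : E3) :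
    ‖Ham μB g kS kT S1 S2 Hhfi PS PT v‖
      ≤ |μB * g| * (∑ i, ‖S1 i + S2 i‖) * ‖v‖ + ‖Hhfi‖ + ‖Kmat kS kT PS PT‖ := by
  rw [Ham]
  refine (norm_sub_le _ _).trans ?_
  rw [norm_smul, Complex.norm_I, one_mul]
  gcongr
  exact (norm_add_le _ _).trans (by gcongr; exact norm_HZmat_le μB g S1 S2 v)

end Hamiltonian

theorem IsSchrodingerSol.hasDerivAt {n : ℕ} {hbar : ℝ} {Hm : ℝ → Matrix (Fin n) (Fin n) ℂ}
    {ψ0 : Fin n → ℂ} {ψ : ℝ → Fin n → ℂ} (h : IsSchrodingerSol hbar Hm ψ0 ψ) (t : ℝ) :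
    HasDerivAt ψ (((-Complex.I / (hbar : ℂ)) • Hm t) *ᵥ ψ t) t := by
  rw [smul_mulVec]
  exact h.2 t

theorem cNorm_le_sqrt_mul_norm {n : ℕ} (a : Fin n → ℂ) : cNorm a ≤ √n * ‖a‖ := by
  rw [cNorm, ← sqrt_sq (norm_nonneg a), ← sqrt_mul (Nat.cast_nonneg n)]
  gcongr
  calc ∑ j, Complex.normSq (a j) = ∑ j, ‖a j‖ ^ 2 := by simp [Complex.normSq_eq_norm_sq]
    _ ≤ ∑ _j : Fin n, ‖a‖ ^ 2 := by gcongr with j; exact norm_le_pi_norm a j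
    _ = n * ‖a‖ ^ 2 := by simp

section FilteredField

variable {γ T t : ℝ} {u δu : ℝ → E3}

theorem norm_vfield_le (hγ : 0 ≤ γ) (v0 : E3) (hu : IntegrableOn u (Ioc 0 T))
    (ht : t ∈ Icc 0 T) : ‖vfield γ v0 u t‖ ≤ ‖v0‖ + γ * ∫ τ in Ioc 0 T, ‖u τ‖ := by
  set L := ∫ τ in Ioc 0 T, ‖u τ‖
  have hint : ‖∫ τ in Ioc 0 t, (γ * exp (γ * τ)) • u τ‖ ≤ γ * exp (γ * t) * L := calc
    _ ≤ ∫ τ in Ioc 0 t, γ * exp (γ * t) * ‖u τ‖ := by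
        refine norm_integral_le_of_norm_le
          ((hu.mono_set (Ioc_subset_Ioc_right ht.2)).norm.const_mul _)
          (ae_restrict_of_forall_mem measurableSet_Ioc fun τ hτ => ?_)
        rw [norm_smul, Real.norm_of_nonneg (by positivity)]
        gcongr
        exact hτ.2
    _ = γ * exp (γ * t) * ∫ τ in Ioc 0 t, ‖u τ‖ := integral_const_mul _ _
    _ ≤ γ * exp (γ * t) * L := by
        gcongr
        exact setIntegral_mono_set hu.norm (ae_of_all _ fun _ => norm_nonneg _)
          (Ioc_subset_Ioc_right ht.2).eventuallyLE
  have hexp : exp (-(γ * t)) * exp (γ * t) = 1 := by rw [← exp_add, neg_add_cancel, exp_zero]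
  calc ‖vfield γ v0 u t‖
      = exp (-(γ * t)) * ‖v0 + ∫ τ in Ioc 0 t, (γ * exp (γ * τ)) • u τ‖ := by
        rw [vfield, norm_smul, Real.norm_of_nonneg (exp_pos _).le]
    _ ≤ exp (-(γ * t)) * (‖v0‖ + γ * exp (γ * t) * L) := by
        gcongr
        exact (norm_add_le _ _).trans (by gcongr)
    _ = exp (-(γ * t)) * ‖v0‖ + γ * L := by linear_combination γ * L * hexp
    _ ≤ ‖v0‖ + γ * L := by
        gcongr
        exact mul_le_of_le_one_left (norm_nonneg _)
          (exp_le_one_iff.2 (neg_nonpos.2 (mul_nonneg hγ ht.1)))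

theorem vfield_add_sub_vfield (γ : ℝ) (v0 : E3) (hu : IntegrableOn u (Ioc 0 t))
    (hδu : IntegrableOn δu (Ioc 0 t)) :
    vfield γ v0 (u + δu) t - vfield γ v0 u t = vfield γ 0 δu t := by
  have hweight : ∀ w : ℝ → E3, IntegrableOn w (Ioc 0 t) →
      IntegrableOn (fun τ => (γ * exp (γ * τ)) • w τ) (Ioc 0 t) := fun w hw =>
    hw.continuousOn_smul_of_subset (by fun_prop) isCompact_Icc measurableSet_Ioc
      Ioc_subset_Icc_self
  simp only [vfield, Pi.add_apply, smul_add, integral_add (hweight u hu) (hweight δu hδu),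
    zero_add]
  module

end FilteredField

theorem exists_pos_norm_le_of_inBox (lo hi : Fin 3 → ℝ) :
    ∃ ρ > 0, ∀ w, inBox lo hi w → ‖w‖ ≤ ρ := by
  obtain ⟨ρ, hρ, h⟩ :=
    ((PiLp.lipschitzWith_toLp 2 _).isBounded_image (Metric.isBounded_Icc lo hi)).exists_pos_norm_le
  exact ⟨ρ, hρ, fun w hw => h w ⟨w.ofLp, ⟨fun i => (hw i).1, fun i => (hw i).2⟩, rfl⟩⟩

namespace Adm

variable {T : ℝ} {lo hi : Fin 3 → ℝ} {u : ℝ → E3}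

theorem integrableOn (hu : Adm T lo hi u) : IntegrableOn u (Ioc 0 T) :=
  hu.1.integrable one_le_two

theorem integral_norm_le (hu : Adm T lo hi u) {ρ : ℝ} (hρ : ∀ w, inBox lo hi w → ‖w‖ ≤ ρ) :
    ∫ τ in Ioc 0 T, ‖u τ‖ ≤ ρ * volume.real (Ioc 0 T) :=
  (le_abs_self _).trans <| by
    simpa using norm_setIntegral_le_of_norm_le_const_ae (f := fun τ => ‖u τ‖) measure_Ioc_lt_top
      (hu.2.mono fun τ hτ => by simpa using hρ _ hτ)

end Adm

section Admissible

variable {n : ℕ} {μB g kS kT γ T τ : ℝ} {S1 S2 : Fin 3 → Matrix (Fin n) (Fin n) ℂ}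
  {Hhfi PS PT : Matrix (Fin n) (Fin n) ℂ} {lo hi : Fin 3 → ℝ} {u δu : ℝ → E3}

theorem norm_Ham_vfield_le (hγ : 0 ≤ γ) (v0 : E3) {ρ : ℝ}
    (hρ : ∀ w, inBox lo hi w → ‖w‖ ≤ ρ) (hu : Adm T lo hi u) (hτ : τ ∈ Icc 0 T) :
    ‖Ham μB g kS kT S1 S2 Hhfi PS PT (vfield γ v0 u τ)‖
      ≤ |μB * g| * (∑ i, ‖S1 i + S2 i‖) * (‖v0‖ + γ * (ρ * volume.real (Ioc 0 T)))
        + ‖Hhfi‖ + ‖Kmat kS kT PS PT‖ := by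
  refine (norm_Ham_le ..).trans ?_
  gcongr
  exact (norm_vfield_le hγ v0 hu.integrableOn hτ).trans (by gcongr; exact hu.integral_norm_le hρ)

theorem norm_Ham_vfield_add_sub_le (hγ : 0 ≤ γ) (v0 : E3) (hu : IntegrableOn u (Ioc 0 T))
    (hδu : IntegrableOn δu (Ioc 0 T)) (hτ : τ ∈ Icc 0 T) :
    ‖Ham μB g kS kT S1 S2 Hhfi PS PT (vfield γ v0 (u + δu) τ)
        - Ham μB g kS kT S1 S2 Hhfi PS PT (vfield γ v0 u τ)‖
      ≤ |μB * g| * (∑ i, ‖S1 i + S2 i‖) * (γ * ∫ τ in Ioc 0 T, ‖δu τ‖) := by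
  have hτT : Ioc 0 τ ⊆ Ioc 0 T := Ioc_subset_Ioc_right hτ.2
  rw [Ham_sub, vfield_add_sub_vfield γ v0 (hu.mono_set hτT) (hδu.mono_set hτT)]
  refine (norm_HZmat_le ..).trans ?_
  gcongr
  simpa using norm_vfield_le hγ 0 hδu hτ

end Admissible

theorem stmt_3_general
    {n s : ℕ}
    (T γ hbar μB g kS kT : ℝ) (hγ : 0 < γ)
    (S1 S2 : Fin 3 → Matrix (Fin n) (Fin n) ℂ) (Hhfi PS PT : Matrix (Fin n) (Fin n) ℂ)
    (lo hi : Fin 3 → ℝ)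
    (v0 : E3) (ψT : Fin s → Fin n → ℂ) :
    ∃ C > 0, ∀ u δu : ℝ → E3, Adm T lo hi u → Adm T lo hi (u + δu) →
      ∀ ψ ψb : Fin s → ℝ → Fin n → ℂ,
        SchroSol γ hbar μB g kS kT S1 S2 Hhfi PS PT v0 ψT u ψ →
        SchroSol γ hbar μB g kS kT S1 S2 Hhfi PS PT v0 ψT (u + δu) ψb →
        ∀ l, ∀ t ∈ Set.Icc (0:ℝ) T,
          cNorm (ψb l t - ψ l t) ≤ C * ∫ τ in Set.Ioc (0:ℝ) T, ‖δu τ‖ := by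
  obtain ⟨ρ, hρ, hbox⟩ := exists_pos_norm_le_of_inBox lo hi
  set a : ℂ := -Complex.I / hbar
  set cZ := |μB * g| * ∑ i, ‖S1 i + S2 i‖
  set K := ‖a‖ * (cZ * (‖v0‖ + γ * (ρ * volume.real (Ioc (0:ℝ) T))) + ‖Hhfi‖
    + ‖Kmat kS kT PS PT‖)
  set C := √n * (‖a‖ * cZ * γ * ‖ψT‖ * T * exp (2 * K * T))
  refine ⟨max C 1, lt_max_of_lt_right one_pos, ?_⟩
  intro u δu hu hub ψ ψb hψ hψb l t ht
  set I := ∫ τ in Ioc 0 T, ‖δu τ‖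
  have hI : 0 ≤ I := setIntegral_nonneg measurableSet_Ioc fun _ _ => norm_nonneg _
  have hδu : IntegrableOn δu (Ioc 0 T) := by simpa using hub.integrableOn.sub hu.integrableOn
  have key := norm_sub_le_of_hasDerivAt_mulVec (K := K) (ε := ‖a‖ * (cZ * (γ * I)))
    (by positivity) (by positivity) (hψ l).hasDerivAt (hψb l).hasDerivAt
    (by rw [(hψ l).1, (hψb l).1])
    (fun τ hτ => (norm_smul_le _ _).trans <| mul_le_mul_of_nonneg_left
      (norm_Ham_vfield_le hγ.le v0 hbox hu (Ico_subset_Icc_self hτ)) (norm_nonneg a))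
    (fun τ hτ => (norm_smul_le _ _).trans <| mul_le_mul_of_nonneg_left
      (norm_Ham_vfield_le hγ.le v0 hbox hub (Ico_subset_Icc_self hτ)) (norm_nonneg a))
    (fun τ hτ => by
      rw [← smul_sub, norm_smul]
      exact mul_le_mul_of_nonneg_left (norm_Ham_vfield_add_sub_le hγ.le v0 hu.integrableOn hδu
        (Ico_subset_Icc_self hτ)) (norm_nonneg a))
    t ht
  have hT : 0 ≤ T := ht.1.trans ht.2
  calc cNorm (ψb l t - ψ l t) ≤ √n * ‖ψb l t - ψ l t‖ := cNorm_le_sqrt_mul_norm _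
    _ ≤ √n * (‖a‖ * (cZ * (γ * I)) * ‖ψT l‖ * T * exp (2 * K * T)) := by
        rw [← (hψ l).1]; gcongr
    _ = √n * (‖a‖ * cZ * γ * ‖ψT l‖ * T * exp (2 * K * T)) * I := by ring
    _ ≤ C * I := by simp only [C]; gcongr; exact norm_le_pi_norm ψT l
    _ ≤ max C 1 * I := by gcongr; exact le_max_left _ _

/-- uniform estimate of the state increment by the L¹ norm of the
control increment. -/
theorem stmt_3
    {n s : ℕ} (hs : 0 < s)
    (T γ hbar μB g kS kT : ℝ) (hT : 0 < T) (hγ : 0 < γ) (hhbar : 0 < hbar)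
    (hμB : 0 < μB) (hg : 0 < g) (hkS : 0 < kS) (hkT : 0 < kT)
    (S1 S2 : Fin 3 → Matrix (Fin n) (Fin n) ℂ) (Hhfi PS PT : Matrix (Fin n) (Fin n) ℂ)
    (hS1 : ∀ i, (S1 i).IsHermitian) (hS2 : ∀ i, (S2 i).IsHermitian)
    (hHhfi : Hhfi.IsHermitian) (hPS : PS.IsHermitian) (hPT : PT.IsHermitian)
    (lo hi : Fin 3 → ℝ) (hbox : ∀ i, lo i ≤ hi i)
    (v0 : E3) (ψT : Fin s → Fin n → ℂ) :
    ∃ C > 0, ∀ u δu : ℝ → E3, Adm T lo hi u → Adm T lo hi (u + δu) →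
      ∀ ψ ψb : Fin s → ℝ → Fin n → ℂ,
        SchroSol γ hbar μB g kS kT S1 S2 Hhfi PS PT v0 ψT u ψ →
        SchroSol γ hbar μB g kS kT S1 S2 Hhfi PS PT v0 ψT (u + δu) ψb →
        ∀ l, ∀ t ∈ Set.Icc (0:ℝ) T,
          cNorm (ψb l t - ψ l t) ≤ C * ∫ τ in Set.Ioc (0:ℝ) T, ‖δu τ‖ :=
  stmt_3_general T γ hbar μB g kS kT hγ S1 S2 Hhfi PS PT lo hi v0 ψT
end
end

section
/- (Equivalence of the integral and pointwise maximum conditions) Let σ : [0,T] → ℝ³ be continuous and let u* ∈ 𝒱 satisfy ∫₀ᵀ ⟨σ(t), u(t)⟩_{ℝ³} dt ≤ ∫₀ᵀ ⟨σ(t), u*(t)⟩_{ℝ³} dt for every u ∈ 𝒱. Then for almost every t ∈ [0,T] one has ⟨σ(t), u*(t)⟩_{ℝ³} = max_{w ∈ V} ⟨σ(t), w⟩_{ℝ³}. -/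
open MeasureTheory Set

noncomputable section

/- The bang-bang control `t ↦ boxArgmax (σ t)`, which maximizes `⟨σ t, ·⟩` over `V` coordinate
by coordinate, is admissible and pointwise dominates `ustar`. Since its payoff integral is
nevertheless at most that of `ustar`, the two pointwise payoffs agree almost everywhere. -/

lemma integrable_sum_mul_of_norm_le {α ι : Type*} [MeasurableSpace α] {μ : Measure α} [Fintype ι]
    {σ u : α → EuclideanSpace ℝ ι} {C : ℝ} (hσ : AEStronglyMeasurable σ μ)
    (hσC : ∀ᵐ t ∂μ, ‖σ t‖ ≤ C) (hu : Integrable u μ) :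
    Integrable (fun t => ∑ i, σ t i * u t i) μ :=
  integrable_finsetSum _ fun i _ =>
    ((EuclideanSpace.proj (𝕜 := ℝ) i).integrable_comp hu).bdd_mul
      ((EuclideanSpace.proj i).continuous.comp_aestronglyMeasurable hσ)
      (by filter_upwards [hσC] with t ht using (PiLp.norm_apply_le _ i).trans ht)

lemma isCompact_setOf_inBox (lo hi : Fin 3 → ℝ) : IsCompact {w | inBox lo hi w} := by
  have hset : {w | inBox lo hi w} = WithLp.toLp 2 '' Icc lo hi := by
    ext w
    constructor
    · intro hw
      exact ⟨w.ofLp, ⟨fun i => (hw i).1, fun i => (hw i).2⟩, rfl⟩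
    · rintro ⟨x, ⟨hlo, hhi⟩, rfl⟩ i
      exact ⟨hlo i, hhi i⟩
  rw [hset]
  exact isCompact_Icc.image (PiLp.continuous_toLp 2 _)

lemma adm_of_ae_inBox {T : ℝ} {lo hi : Fin 3 → ℝ} {u : ℝ → E3}
    (hu : AEStronglyMeasurable u (volume.restrict (Ioc 0 T)))
    (hbox : ∀ᵐ t ∂(volume.restrict (Ioc 0 T)), inBox lo hi (u t)) : Adm T lo hi u := by
  obtain ⟨C, hC⟩ := isBounded_iff_forall_norm_le.1 (isCompact_setOf_inBox lo hi).isBounded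
  exact ⟨MemLp.of_bound hu C (by filter_upwards [hbox] with t ht using hC _ ht), hbox⟩

def boxArgmax (lo hi : Fin 3 → ℝ) (s : E3) : E3 :=
  WithLp.toLp 2 fun i => if 0 ≤ s i then hi i else lo i

lemma inBox_boxArgmax {lo hi : Fin 3 → ℝ} (hbox : ∀ i, lo i ≤ hi i) (s : E3) :
    inBox lo hi (boxArgmax lo hi s) := by
  intro i
  simp only [boxArgmax, PiLp.toLp_apply]
  split_ifs
  · exact ⟨hbox i, le_rfl⟩
  · exact ⟨le_rfl, hbox i⟩

lemma sum_mul_le_sum_mul_boxArgmax {lo hi : Fin 3 → ℝ} (s : E3) {w : E3} (hw : inBox lo hi w) :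
    ∑ i, s i * w i ≤ ∑ i, s i * boxArgmax lo hi s i := by
  refine Finset.sum_le_sum fun i _ => ?_
  simp only [boxArgmax, PiLp.toLp_apply]
  split_ifs with hs
  · exact mul_le_mul_of_nonneg_left (hw i).2 hs
  · exact mul_le_mul_of_nonpos_left (hw i).1 (not_le.1 hs).le

lemma measurable_boxArgmax (lo hi : Fin 3 → ℝ) : Measurable (boxArgmax lo hi) :=
  (PiLp.continuous_toLp 2 _).measurable.comp <| measurable_pi_iff.2 fun i =>
    Measurable.ite (measurableSet_le measurable_const
      (EuclideanSpace.proj i).continuous.measurable) measurable_const measurable_const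

lemma isGreatest_of_sum_mul_eq_boxArgmax {lo hi : Fin 3 → ℝ} {s w : E3} (hw : inBox lo hi w)
    (h : ∑ i, s i * w i = ∑ i, s i * boxArgmax lo hi s i) :
    IsGreatest ((fun v : E3 => ∑ i, s i * v i) '' {v | inBox lo hi v}) (∑ i, s i * w i) := by
  refine ⟨⟨w, hw, rfl⟩, ?_⟩
  rintro _ ⟨v, hv, rfl⟩
  exact h ▸ sum_mul_le_sum_mul_boxArgmax s hv

/-- equivalence of the integral and pointwise maximum conditions. -/
theorem stmt_19 (T : ℝ) (hT : 0 < T) (lo hi : Fin 3 → ℝ) (hbox : ∀ i, lo i ≤ hi i)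
    (σ : ℝ → E3) (hσ : ContinuousOn σ (Set.Icc 0 T))
    (ustar : ℝ → E3) (hstar : Adm T lo hi ustar)
    (hmax : ∀ u : ℝ → E3, Adm T lo hi u →
      (∫ t in (0:ℝ)..T, ∑ i, σ t i * u t i) ≤ ∫ t in (0:ℝ)..T, ∑ i, σ t i * ustar t i) :
    ∀ᵐ t ∂(volume.restrict (Set.Icc (0:ℝ) T)),
      IsGreatest ((fun w : E3 => ∑ i, σ t i * w i) '' {w | inBox lo hi w})
        (∑ i, σ t i * ustar t i) := by
  obtain ⟨C, hC⟩ := isCompact_Icc.exists_bound_of_continuousOn hσ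
  have hσm : AEStronglyMeasurable σ (volume.restrict (Ioc 0 T)) :=
    (hσ.mono Ioc_subset_Icc_self).aestronglyMeasurable measurableSet_Ioc
  have hpayoff (u : ℝ → E3) (hu : Adm T lo hi u) :
      Integrable (fun t => ∑ i, σ t i * u t i) (volume.restrict (Ioc 0 T)) :=
    integrable_sum_mul_of_norm_le hσm
      (ae_restrict_of_forall_mem measurableSet_Ioc fun t ht => hC t (Ioc_subset_Icc_self ht))
      (hu.1.integrable one_le_two)
  have hbang : Adm T lo hi (fun t => boxArgmax lo hi (σ t)) :=
    adm_of_ae_inBox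
      ((measurable_boxArgmax lo hi).comp_aemeasurable hσm.aemeasurable).aestronglyMeasurable
      (ae_of_all _ fun t => inBox_boxArgmax hbox (σ t))
  have hle : (fun t => ∑ i, σ t i * ustar t i) ≤ᵐ[volume.restrict (Ioc 0 T)]
      fun t => ∑ i, σ t i * boxArgmax lo hi (σ t) i := by
    filter_upwards [hstar.2] with t ht using sum_mul_le_sum_mul_boxArgmax (σ t) ht
  have hge := hmax _ hbang
  rw [intervalIntegral.integral_of_le hT.le, intervalIntegral.integral_of_le hT.le] at hge
  have heq := (integral_eq_iff_of_ae_le (hpayoff _ hstar) (hpayoff _ hbang) hle).1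
    (le_antisymm (integral_mono_ae (hpayoff _ hstar) (hpayoff _ hbang) hle) hge)
  rw [← Measure.restrict_congr_set Ioc_ae_eq_Icc]
  filter_upwards [heq, hstar.2] with t ht hin
  exact isGreatest_of_sum_mul_eq_boxArgmax hin ht
end
end
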